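/- PELT pruning is valid: assume condition C2 holds with constant κ, i.e. C(y_{t+1:s}) + C(y_{s+1:T}) + κ ≤ C(y_{t+1:T}) for all t < s < T. If F(t) + C(y_{t+1:s}) + κ > F(s) for some t < s, then for every T > s, F(t) + C(y_{t+1:T}) ≥ F(s) + C(y_{s+1:T}); in particular t cannot be the unique minimiser in the Optimal Partitioning recursion F(T) = min_{0 ≤ τ < T}[F(τ) + C(y_{τ+1:T}) + β]. -/
import Mathlib


/-- validity of PELT pruning. -/
theorem pelt_pruning_valid (C : ℕ → ℕ → ℝ) (κ β : ℝ) (hβ : 0 ≤ β)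
    (hC2 : ∀ t s T : ℕ, t < s → s < T → C t s + C s T + κ ≤ C t T)
    (F : ℕ → ℝ) (hF0 : F 0 = -β)
    (hF : ∀ T : ℕ, ∀ hT : 1 ≤ T,
      F T = (Finset.range T).inf' (Finset.nonempty_range_iff.mpr (by omega))
        (fun τ => F τ + C τ T + β))
    (t s : ℕ) (hts : t < s) (hprune : F s < F t + C t s + κ) :
    ∀ T : ℕ, s < T →
      (F s + C s T ≤ F t + C t T) ∧
      ¬ (∀ τ : ℕ, τ < T → τ ≠ t → F t + C t T + β < F τ + C τ T + β) := by
  intro T hsT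
  have h1 : C t s + C s T + κ ≤ C t T := hC2 t s T hts hsT
  have key : F s + C s T ≤ F t + C t T := by linarith
  refine ⟨key, fun h => ?_⟩
  have := h s hsT (by omega)
  linarith
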